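/- Let X be a quasi-compact and separated scheme covered by open subschemes U_1, …, U_n with U_n affine, and let u_n : U_n → X denote the inclusion. Let G be a quasi-coherent sheaf on X such that the restriction G|U_i is zero for every 1 ≤ i ≤ n−1. Then the unit morphism c : G → u_{n*}(G|U_n) of the adjunction (u_n^*, u_{n*}) is an isomorphism of quasi-coherent sheaves on X. -/

import Mathlib

/-!
Common setup: the category of quasi-coherent sheaves on a scheme, and the
direct image functor on (quasi-coherent) sheaves of modules induced by a
morphism of schemes.
-/

open CategoryTheory AlgebraicGeometry TopologicalSpace Limits

universe w u

namespace DerivedQCoh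

/-- The morphism of sheaves of rings underlying a morphism of schemes `f : X ⟶ Y`,
given by the structure morphism `f.c`. -/
noncomputable def ringCatSheafHom {X Y : Scheme.{u}} (f : X ⟶ Y) :
    Y.ringCatSheaf ⟶
      ((Opens.map f.base).sheafPushforwardContinuous RingCat.{u}
        (Opens.grothendieckTopology Y) (Opens.grothendieckTopology X)).obj X.ringCatSheaf :=
  ⟨Functor.whiskerRight f.c (forget₂ CommRingCat RingCat)⟩

/-- The direct image functor `f_*` on sheaves of modules induced by a morphism of
schemes `f : X ⟶ Y`. -/
noncomputable def pushforwardModules {X Y : Scheme.{u}} (f : X ⟶ Y) :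
    X.Modules ⥤ Y.Modules :=
  SheafOfModules.pushforward.{u} (ringCatSheafHom f)

/-- `QCoh X` is the category of quasi-coherent sheaves of `O_X`-modules on a
scheme `X`, i.e. the full subcategory of sheaves of modules on `X` consisting of
the quasi-coherent ones. -/
def QCoh (X : Scheme.{u}) : Type (u + 1) :=
  ObjectProperty.FullSubcategory (fun M : X.Modules => M.IsQuasicoherent)

noncomputable instance (X : Scheme.{u}) : Category.{u} (QCoh X) :=
  inferInstanceAs (Category (ObjectProperty.FullSubcategory _))

/-- The underlying sheaf of modules of a quasi-coherent sheaf. -/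
def QCoh.sheaf {X : Scheme.{u}} (M : QCoh X) : X.Modules :=
  ObjectProperty.FullSubcategory.obj M

/-- A quasi-coherent sheaf is quasi-coherent. -/
lemma QCoh.isQuasicoherent {X : Scheme.{u}} (M : QCoh X) : M.sheaf.IsQuasicoherent :=
  ObjectProperty.FullSubcategory.property M

/-- The (fully faithful) inclusion of quasi-coherent sheaves into all sheaves of
modules. -/
noncomputable def QCoh.ι (X : Scheme.{u}) : QCoh X ⥤ X.Modules :=
  ObjectProperty.ι _

/-- The direct image functor `f_* : QCoh X ⥤ QCoh Y` on quasi-coherent sheaves,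
given the fact that the direct image on sheaves of modules preserves
quasi-coherence. -/
noncomputable def pushforwardQCoh {X Y : Scheme.{u}} (f : X ⟶ Y)
    (h : ∀ M : QCoh X, ((pushforwardModules f).obj M.sheaf).IsQuasicoherent) :
    QCoh X ⥤ QCoh Y :=
  ObjectProperty.lift _ (QCoh.ι X ⋙ pushforwardModules f) h

end DerivedQCoh

/-!
Every point of `X` lies in `U_n` or in `O = U_1 ∪ … ∪ U_{n-1}`, and `G` vanishes on `O` because it
vanishes on each of these `U_i` and is a sheaf. For an open `V`, the sheaf condition for
`V = (V ∩ U_n) ∪ (V ∩ O)` is a pullback square whose two corners over `O` are zero, so the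
restriction `G(V) → G(V ∩ U_n)` is an isomorphism. Any left adjoint of `u_{n*}` is canonically the
restriction along `u_n`, under which these restriction maps are the components of the unit.
-/

open Opposite

namespace TopCat.Sheaf

variable {C : Type*} [Category C] {X : TopCat.{u}} (F : TopCat.Sheaf C X)

lemma isIso_map_of_le_sup_of_isZero {O : Opens X} (hO : ∀ V ≤ O, IsZero (F.presheaf.obj (op V)))
    {U V : Opens X} (i : U ⟶ V) (hV : V ≤ U ⊔ O) : IsIso (F.presheaf.map i.op) := by
  have hUO : U ⊔ V ⊓ O = V := le_antisymm (sup_le (leOfHom i) inf_le_left)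
    ((le_inf le_rfl hV).trans (by rw [inf_sup_left]; exact sup_le_sup_right inf_le_right _))
  have hfst : IsIso (F.presheaf.map (homOfLE (le_sup_left : U ≤ U ⊔ V ⊓ O)).op) := by
    have hsnd : IsIso (F.presheaf.map (homOfLE (inf_le_right : U ⊓ (V ⊓ O) ≤ V ⊓ O)).op) := by
      have hsrc := hO (V ⊓ O) inf_le_right
      have htgt := hO (U ⊓ (V ⊓ O)) (inf_le_right.trans inf_le_right)
      exact ⟨htgt.to_ _, hsrc.eq_of_src _ _, htgt.eq_of_src _ _⟩
    exact (IsPullback.of_isLimit (F.isLimitPullbackCone U (V ⊓ O))).isIso_fst_of_isIso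
  have hi : F.presheaf.map i.op = F.presheaf.map (eqToHom hUO).op ≫ F.presheaf.map (homOfLE le_sup_left).op := by
    rw [← F.presheaf.map_comp]
    rfl
  rw [hi]
  infer_instance

lemma isZero_obj_of_le_sSup [HasZeroMorphisms C] [HasZeroObject C] {𝒮 : Set (Opens X)}
    (h𝒮 : ∀ S ∈ 𝒮, ∀ V ≤ S, IsZero (F.presheaf.obj (op V))) :
    ∀ V ≤ sSup 𝒮, IsZero (F.presheaf.obj (op V)) := by
  intro V hV
  let W : 𝒮 → Opens X := fun S ↦ S.1 ⊓ V
  have hW : iSup W = V := by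
    rw [← iSup_inf_eq, ← sSup_eq_iSup', inf_eq_right.mpr hV]
  have hlim := (F.presheaf.isSheaf_iff_isSheafPairwiseIntersections.mp F.2 W).some
  rw [← hW]
  refine hlim.isZero_pt (Functor.isZero _ ?_)
  rintro ⟨⟨S⟩ | ⟨S, T⟩⟩
  · exact h𝒮 S.1 S.2 _ inf_le_left
  · exact h𝒮 S.1 S.2 _ (inf_le_left.trans inf_le_left)

end TopCat.Sheaf

lemma CategoryTheory.Adjunction.isIso_unit_app_iff_of_rightAdjoint {C D : Type*} [Category C]
    [Category D] {F F' : C ⥤ D} {G : D ⥤ C} (adj₁ : F ⊣ G) (adj₂ : F' ⊣ G) (x : C) :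
    IsIso (adj₁.unit.app x) ↔ IsIso (adj₂.unit.app x) := by
  rw [← unit_leftAdjointUniq_hom_app adj₁ adj₂, isIso_comp_right_iff]

namespace AlgebraicGeometry.Scheme.Modules

variable {X Y : Scheme.{u}} (f : Y ⟶ X) [IsOpenImmersion f]

lemma isZero_presheaf_obj_of_isZero_restrict {M : X.Modules} (hM : IsZero (M.restrict f))
    {V : X.Opens} (hV : V ≤ f.opensRange) : IsZero (M.presheaf.obj (op V)) := by
  have h : IsZero ((M.restrict f).presheaf.obj (op (f ⁻¹ᵁ V))) :=
    ((toPresheaf Y).map_isZero hM).obj _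
  rwa [restrict_obj, f.image_preimage_eq_opensRange_inf, inf_eq_right.mpr hV] at h

lemma isIso_restrictAdjunction_unit_app_iff (M : X.Modules) :
    IsIso ((restrictAdjunction f).unit.app M) ↔
      ∀ V, IsIso (M.presheaf.map (homOfLE (f.image_preimage_le V)).op) := by
  rw [Hom.isIso_iff_isIso_app]
  rfl

end AlgebraicGeometry.Scheme.Modules

namespace DerivedQCoh

open Scheme.Modules

theorem unit_of_last_affine_open_isIso_general
    (X : Scheme.{u})
    (n : ℕ) (U : Fin (n + 1) → Scheme.{u}) (u : ∀ i, U i ⟶ X)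
    [∀ i, IsOpenImmersion (u i)]
    (hcover : ∀ x : X, ∃ i, x ∈ Set.range ((u i).base))
    (pulls : ∀ i, X.Modules ⥤ (U i).Modules)
    (adjs : ∀ i, pulls i ⊣ pushforwardModules (u i))
    (G : X.Modules)
    (hvanish : ∀ i, i ≠ Fin.last n → IsZero ((pulls i).obj G)) :
    IsIso ((adjs (Fin.last n)).unit.app G) := by
  let F : TopCat.Sheaf Ab X := ⟨G.presheaf, G.isSheaf⟩
  let O : Set X.Opens := Set.range fun i : {i // i ≠ Fin.last n} => (u i).opensRange
  have hO : ∀ V ≤ sSup O, IsZero (F.presheaf.obj (op V)) := by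
    refine F.isZero_obj_of_le_sSup ?_
    rintro _ ⟨i, rfl⟩ V hV
    exact isZero_presheaf_obj_of_isZero_restrict (u i)
      ((hvanish i i.2).of_iso (((adjs i).leftAdjointUniq (restrictAdjunction (u i))).app G).symm)
      hV
  have hsup : ∀ V, V ≤ u (Fin.last n) ''ᵁ u (Fin.last n) ⁻¹ᵁ V ⊔ sSup O := by
    intro V x hx
    obtain ⟨i, hi⟩ := hcover x
    rw [Scheme.Hom.image_preimage_eq_opensRange_inf]
    by_cases hlast : i = Fin.last n
    · subst hlast
      exact Or.inl ⟨hi, hx⟩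
    · exact Or.inr (le_sSup (s := O) ⟨⟨i, hlast⟩, rfl⟩ hi)
  refine ((adjs _).isIso_unit_app_iff_of_rightAdjoint (restrictAdjunction _) G).mpr <|
    (isIso_restrictAdjunction_unit_app_iff _ G).mpr fun V ↦
      F.isIso_map_of_le_sup_of_isZero hO _ (hsup V)

/-- Let `X` be a quasi-compact and separated scheme covered by
open subschemes `U i` (`i : Fin (n+1)`), the last of which is affine, with
inclusions `u i : U i ⟶ X`.  The inverse image functors `u_i^*` (restriction to
`U i`) are encoded as left adjoints `pulls i` of the direct image functors
`(u i)_*` on sheaves of modules.  Let `G` be a quasi-coherent sheaf on `X` whose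
restriction `G|U_i = (pulls i).obj G` is zero for every `i` other than the last
one.  Then the unit morphism `c : G ⟶ u_{n*}(G|U_n)` of the adjunction
`(u_n^*, u_{n*})` is an isomorphism (of quasi-coherent sheaves on `X`). -/
theorem unit_of_last_affine_open_isIso
    (X : Scheme.{u}) [CompactSpace X] [X.IsSeparated]
    (n : ℕ) (U : Fin (n + 1) → Scheme.{u}) (u : ∀ i, U i ⟶ X)
    [∀ i, IsOpenImmersion (u i)] [IsAffine (U (Fin.last n))]
    (hcover : ∀ x : X, ∃ i, x ∈ Set.range ((u i).base))
    (pulls : ∀ i, X.Modules ⥤ (U i).Modules)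
    (adjs : ∀ i, pulls i ⊣ pushforwardModules (u i))
    (G : X.Modules) (hG : G.IsQuasicoherent)
    (hvanish : ∀ i, i ≠ Fin.last n → IsZero ((pulls i).obj G)) :
    IsIso ((adjs (Fin.last n)).unit.app G) :=
  unit_of_last_affine_open_isIso_general X n U u hcover pulls adjs G hvanish

end DerivedQCoh
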